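/- arXiv:2305.15356 — 2 statements merged into one kernel-verified Lean document; each statement's English description precedes it below -/
import Mathlib

section
/- For α ∈ (1/2, 1) the principal value PV ∫₀^∞ t^(α−1)/(1−t) dt is strictly negative, and for α ∈ (0, 1/2) it is strictly positive. -/
open MeasureTheory Filter Real Set Topology Interval

/-!
Substituting `t ↦ t⁻¹` in the tail turns the truncated principal value into
`∫₀^{1-ε} (t^(α-1) - t^(-α)) / (1 - t) dt` minus the integral of `t^(-α) / (1 - t)` over
`[1 - ε, 1/(1 + ε)]`, an interval of length `O(ε²)` on which the integrand is `O(1/ε)`.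
The new integrand has the sign of `1/2 - α` on `(0, 1)`, so the truncated integrals move
monotonically away from zero as `ε ↓ 0`, and their limit is at least as far from zero as
the integral over `(0, 1/2)`.
-/

theorem intervalIntegrable_rpow_div_one_sub {β c : ℝ} (hβ : -1 < β) (hc : c < 1) :
    IntervalIntegrable (fun t : ℝ => t ^ β / (1 - t)) volume 0 c := by
  simp only [div_eq_mul_inv]
  refine (intervalIntegral.intervalIntegrable_rpow' hβ).mul_continuousOn ?_
  exact (continuous_const.sub continuous_id).continuousOn.inv₀ fun t ht =>
    sub_ne_zero.2 (ht.2.trans_lt (max_lt one_pos hc)).ne'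

theorem integral_Ioi_rpow_div_one_sub {α a : ℝ} (ha : 0 < a) :
    ∫ t in Ioi a, t ^ (α - 1) / (1 - t) = -∫ t in (0:ℝ)..a⁻¹, t ^ (-α) / (1 - t) := by
  have hderiv : ∀ x ∈ Ioi a, HasDerivWithinAt (·⁻¹) (-(x ^ 2)⁻¹) (Ioi a) x := fun x hx =>
    (hasDerivAt_inv (ha.trans hx).ne').hasDerivWithinAt
  have hsubst := integral_image_eq_integral_abs_deriv_smul measurableSet_Ioi hderiv
    inv_injective.injOn fun t : ℝ => t ^ (-α) / (1 - t)
  rw [image_inv_eq_inv, inv_Ioi₀ ha] at hsubst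
  rw [intervalIntegral.integral_of_le (inv_pos.2 ha).le, integral_Ioc_eq_integral_Ioo, hsubst,
    ← integral_neg]
  refine setIntegral_congr_fun measurableSet_Ioi fun x hx => ?_
  have hx : 0 < x := ha.trans hx
  -- at `x = 1` both integrands are `_ / 0 = 0`
  rcases eq_or_ne x 1 with rfl | hx1
  · simp
  have : 1 - x ≠ 0 := sub_ne_zero.2 hx1.symm
  have : x - 1 ≠ 0 := sub_ne_zero.2 hx1
  simp only [smul_eq_mul, abs_neg, abs_inv, abs_of_pos (pow_pos hx 2), inv_rpow hx.le,
    rpow_neg hx.le, inv_inv, rpow_sub_one hx.ne']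
  field_simp
  ring

theorem integral_add_integral_Ioi_rpow_div_one_sub {α ε : ℝ} (hα : α ∈ Ioo 0 1) (hε : 0 < ε) :
    (∫ t in (0:ℝ)..(1 - ε), t ^ (α - 1) / (1 - t)) + (∫ t in Ioi (1 + ε), t ^ (α - 1) / (1 - t))
      + ∫ t in (1 - ε)..(1 + ε)⁻¹, t ^ (-α) / (1 - t)
      = ∫ t in (0:ℝ)..(1 - ε), (t ^ (α - 1) - t ^ (-α)) / (1 - t) := by
  have hα₁ : -1 < α - 1 := by linarith [hα.1]
  have hα₂ : -1 < -α := by linarith [hα.2]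
  have hε₁ : 1 - ε < 1 := by linarith
  have hε₂ : (1 + ε)⁻¹ < 1 := inv_lt_one_of_one_lt₀ (by linarith)
  have hh := intervalIntegrable_rpow_div_one_sub hα₂ hε₁
  simp only [sub_div]
  rw [integral_Ioi_rpow_div_one_sub (by linarith),
    intervalIntegral.integral_sub (intervalIntegrable_rpow_div_one_sub hα₁ hε₁) hh,
    ← intervalIntegral.integral_add_adjacent_intervals hh
      (hh.symm.trans (intervalIntegrable_rpow_div_one_sub hα₂ hε₂))]
  ring

theorem tendsto_intervalIntegral_div_one_sub {f : ℝ → ℝ} (hf : ContinuousOn f (Icc (1/2) 1)) :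
    Tendsto (fun ε => ∫ t in (1 - ε)..(1 + ε)⁻¹, f t / (1 - t)) (𝓝[>] 0) (𝓝 0) := by
  obtain ⟨C, hC⟩ := isCompact_Icc.exists_bound_of_continuousOn hf
  refine squeeze_zero_norm' (a := fun ε => 2 * max C 0 * ε) ?_ ?_
  · filter_upwards [Ioo_mem_nhdsGT (by norm_num : (0:ℝ) < 1/2)] with ε ⟨hε0, hε1⟩
    have hle : 1 - ε ≤ (1 + ε)⁻¹ := by
      rw [le_inv_comm₀ (by linarith) (by linarith), inv_eq_one_div, le_div_iff₀ (by linarith)]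
      nlinarith
    have hbound : ∀ t ∈ Ι (1 - ε) (1 + ε)⁻¹, ‖f t / (1 - t)‖ ≤ 2 * max C 0 / ε := by
      intro t ht
      rw [uIoc_of_le hle] at ht
      have hgap : ε / 2 ≤ 1 - t := by
        have : 1 - (1 + ε)⁻¹ = ε / (1 + ε) := by field_simp; ring
        have : ε / 2 ≤ ε / (1 + ε) := div_le_div_of_nonneg_left hε0.le (by linarith) (by linarith)
        linarith [ht.2]
      have hft : ‖f t‖ ≤ max C 0 :=
        (hC t ⟨by linarith [ht.1], by linarith⟩).trans (le_max_left C 0)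
      rw [norm_div, Real.norm_of_nonneg (by linarith : 0 ≤ 1 - t), div_le_div_iff₀ (by linarith) hε0]
      nlinarith [norm_nonneg (f t), le_max_right C 0]
    have hlen : |(1 + ε)⁻¹ - (1 - ε)| ≤ ε ^ 2 := by
      rw [abs_of_nonneg (sub_nonneg.2 hle), sub_le_iff_le_add,
        inv_le_iff_one_le_mul₀ (by linarith)]
      nlinarith
    calc ‖∫ t in (1 - ε)..(1 + ε)⁻¹, f t / (1 - t)‖
        ≤ 2 * max C 0 / ε * |(1 + ε)⁻¹ - (1 - ε)| :=
          intervalIntegral.norm_integral_le_of_norm_le_const hbound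
      _ ≤ 2 * max C 0 / ε * ε ^ 2 := by gcongr
      _ = 2 * max C 0 * ε := by field_simp
  · exact tendsto_nhdsWithin_of_tendsto_nhds
      (by simpa using (continuous_const_mul (2 * max C 0)).tendsto 0)

theorem pos_of_tendsto_intervalIntegral_one_sub {k : ℝ → ℝ} {L : ℝ}
    (hk : ∀ c < 1, IntervalIntegrable k volume 0 c) (hpos : ∀ t ∈ Ioo 0 1, 0 < k t)
    (hL : Tendsto (fun ε => ∫ t in (0:ℝ)..(1 - ε), k t) (𝓝[>] 0) (𝓝 L)) : 0 < L := by
  have hhalf : 0 < ∫ t in (0:ℝ)..(1/2), k t :=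
    intervalIntegral.intervalIntegral_pos_of_pos_on (hk _ (by norm_num))
      (fun t ht => hpos t ⟨ht.1, by linarith [ht.2]⟩) (by norm_num)
  refine hhalf.trans_le (ge_of_tendsto hL ?_)
  filter_upwards [Ioo_mem_nhdsGT (by norm_num : (0:ℝ) < 1/2)] with ε ⟨hε0, hε1⟩
  refine intervalIntegral.integral_mono_interval le_rfl (by norm_num) (by linarith) ?_
    (hk _ (by linarith))
  filter_upwards [ae_restrict_mem measurableSet_Ioc] with t ht
  exact (hpos t ⟨ht.1, by linarith [ht.2]⟩).le

/-- For `α ∈ (1/2,1)` the principal value `PV ∫₀^∞ t^(α−1)/(1−t) dt` is strictly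
negative, while for `α ∈ (0,1/2)` it is strictly positive. -/
theorem pv_integral_sign (α : ℝ) (hα : α ∈ Set.Ioo (0:ℝ) 1) (L : ℝ)
    (hL : Tendsto
      (fun ε : ℝ =>
        (∫ t in (0:ℝ)..(1 - ε), t ^ (α - 1) / (1 - t)) +
        ∫ t in Set.Ioi (1 + ε), t ^ (α - 1) / (1 - t))
      (nhdsWithin 0 (Set.Ioi 0)) (nhds L)) :
    (α ∈ Set.Ioo (1/2 : ℝ) 1 → L < 0) ∧ (α ∈ Set.Ioo (0:ℝ) (1/2) → 0 < L) := by
  have hk : ∀ c < 1,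
      IntervalIntegrable (fun t => (t ^ (α - 1) - t ^ (-α)) / (1 - t)) volume 0 c := fun c hc => by
    simpa only [sub_div] using
      (intervalIntegrable_rpow_div_one_sub (by linarith [hα.1]) hc).sub
        (intervalIntegrable_rpow_div_one_sub (by linarith [hα.2]) hc)
  have hboundary := tendsto_intervalIntegral_div_one_sub (f := fun t => t ^ (-α))
    (continuousOn_id.rpow_const fun t ht => Or.inl (by linarith [ht.1] : (0:ℝ) < t).ne')
  have hH : Tendsto (fun ε => ∫ t in (0:ℝ)..(1 - ε), (t ^ (α - 1) - t ^ (-α)) / (1 - t))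
      (𝓝[>] 0) (𝓝 L) := by
    simpa only [add_zero] using (hL.add hboundary).congr' <| eventually_nhdsWithin_of_forall (s := Ioi 0)
      fun ε hε => integral_add_integral_Ioi_rpow_div_one_sub hα hε
  constructor
  · rintro ⟨hα₂, -⟩
    have := pos_of_tendsto_intervalIntegral_one_sub
      (k := fun t => -((t ^ (α - 1) - t ^ (-α)) / (1 - t))) (fun c hc => (hk c hc).neg)
      (fun t ht => neg_pos.2 <| div_neg_of_neg_of_pos
        (sub_neg.2 <| rpow_lt_rpow_of_exponent_gt ht.1 ht.2 (by linarith)) (sub_pos.2 ht.2))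
      (by simpa only [intervalIntegral.integral_neg] using hH.neg)
    linarith
  · rintro ⟨-, hα₂⟩
    exact pos_of_tendsto_intervalIntegral_one_sub hk
      (fun t ht => div_pos (sub_pos.2 <| rpow_lt_rpow_of_exponent_gt ht.1 ht.2 (by linarith))
        (sub_pos.2 ht.2)) hH
end

section
/- For x₁ > 0, α ∈ (0,1), and 0 < ε < x₁/2, the function s ↦ (s^(α−1) − (2x₁ − s)^(α−1))/(x₁ − s) is integrable on [x₁ − ε, x₁], and ∫_{x₁−ε}^{x₁} |(s^(α−1) − (2x₁−s)^(α−1))/(x₁ − s)| ds ≤ C (x₁^(α−1) − (x₁−ε)^(α−1))/(α−1) for a constant C depending only on α. -/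
open MeasureTheory Real Set

/-!
Since `p = α - 1 ≤ 1`, the derivative `p t^(p-1)` of `t ↦ t^p` has modulus decreasing in `t`,
so the mean value theorem on `[s, 2x₁ - s]` bounds the integrand by `2(1 - α) s^(α-2)`,
a continuous majorant on `[x₁ - ε, x₁]` whose integral is explicit.
-/

lemma abs_rpow_sub_rpow_le {p s t : ℝ} (hp : p ≤ 1) (hs : 0 < s) (hst : s ≤ t) :
    |t ^ p - s ^ p| ≤ |p| * s ^ (p - 1) * (t - s) := by
  have hderiv : ∀ x ∈ Icc s t, HasDerivWithinAt (· ^ p) (p * x ^ (p - 1)) (Icc s t) x :=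
    fun x hx => (hasDerivAt_rpow_const (Or.inl (hs.trans_le hx.1).ne')).hasDerivWithinAt
  have hbound : ∀ x ∈ Ico s t, ‖p * x ^ (p - 1)‖ ≤ |p| * s ^ (p - 1) := by
    intro x hx
    rw [norm_mul, norm_eq_abs, norm_of_nonneg (rpow_nonneg (hs.trans_le hx.1).le _)]
    exact mul_le_mul_of_nonneg_left (rpow_le_rpow_of_nonpos hs hx.1 (by linarith)) (abs_nonneg p)
  exact norm_image_sub_le_of_norm_deriv_le_segment' hderiv hbound t (right_mem_Icc.2 hst)

lemma abs_rpow_sub_rpow_reflect_div_le {p s x : ℝ} (hp : p ≤ 1) (hs : 0 < s) (hsx : s ≤ x) :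
    |(s ^ p - (2 * x - s) ^ p) / (x - s)| ≤ 2 * |p| * s ^ (p - 1) := by
  have hxs : 0 ≤ x - s := sub_nonneg.2 hsx
  rw [abs_div, abs_of_nonneg hxs, abs_sub_comm]
  refine div_le_of_le_mul₀ hxs (by positivity) ?_
  calc |(2 * x - s) ^ p - s ^ p| ≤ |p| * s ^ (p - 1) * (2 * x - s - s) :=
        abs_rpow_sub_rpow_le hp hs (by linarith)
    _ = 2 * |p| * s ^ (p - 1) * (x - s) := by ring

/-- For `x₁ > 0`, `α ∈ (0,1)` and `0 < ε < x₁/2`, the function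
`s ↦ (s^(α−1) − (2x₁−s)^(α−1))/(x₁−s)` is integrable on `[x₁−ε, x₁]` and its
`L¹`-norm there is bounded by `C (x₁^(α−1) − (x₁−ε)^(α−1))/(α−1)` with `C = C(α)`. -/
theorem integrable_difference_quotient (α : ℝ) (hα : α ∈ Set.Ioo (0:ℝ) 1) :
    ∃ C : ℝ, 0 < C ∧ ∀ x₁ ε : ℝ, 0 < x₁ → 0 < ε → ε < x₁ / 2 →
      IntegrableOn
        (fun s : ℝ => (s ^ (α - 1) - (2 * x₁ - s) ^ (α - 1)) / (x₁ - s))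
        (Set.Icc (x₁ - ε) x₁) volume ∧
      (∫ s in (x₁ - ε)..x₁,
          |(s ^ (α - 1) - (2 * x₁ - s) ^ (α - 1)) / (x₁ - s)|) ≤
        C * (x₁ ^ (α - 1) - (x₁ - ε) ^ (α - 1)) / (α - 1) := by
  obtain ⟨-, hα1⟩ := hα
  refine ⟨2 * (1 - α), by linarith, fun x₁ ε hx₁ hε hεx => ?_⟩
  have ha : 0 < x₁ - ε := by linarith
  have hle : x₁ - ε ≤ x₁ := by linarith
  have hbound : ∀ s ∈ Icc (x₁ - ε) x₁,
      |(s ^ (α - 1) - (2 * x₁ - s) ^ (α - 1)) / (x₁ - s)| ≤ 2 * (1 - α) * s ^ (α - 2) := by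
    intro s hs
    have h := abs_rpow_sub_rpow_reflect_div_le (p := α - 1) (by linarith)
      (ha.trans_le hs.1) hs.2
    rwa [abs_of_neg (a := α - 1) (by linarith), show α - 1 - 1 = α - 2 by ring, neg_sub] at h
  have hg : IntegrableOn (fun s : ℝ => 2 * (1 - α) * s ^ (α - 2)) (Icc (x₁ - ε) x₁) :=
    (continuousOn_const.mul (continuousOn_id.rpow_const fun s hs =>
      Or.inl (ha.trans_le hs.1).ne')).integrableOn_Icc
  have hf : IntegrableOn (fun s : ℝ => (s ^ (α - 1) - (2 * x₁ - s) ^ (α - 1)) / (x₁ - s))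
      (Icc (x₁ - ε) x₁) :=
    hg.mono' (Measurable.aestronglyMeasurable (by fun_prop)) ((ae_restrict_iff' measurableSet_Icc).2 (ae_of_all _ hbound))
  refine ⟨hf, ?_⟩
  have h0 : (0 : ℝ) ∉ uIcc (x₁ - ε) x₁ := by
    rw [uIcc_of_le hle]; exact fun h => ha.not_ge h.1
  calc (∫ s in (x₁ - ε)..x₁, |(s ^ (α - 1) - (2 * x₁ - s) ^ (α - 1)) / (x₁ - s)|)
      ≤ ∫ s in (x₁ - ε)..x₁, 2 * (1 - α) * s ^ (α - 2) :=
        intervalIntegral.integral_mono_on hle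
          ((intervalIntegrable_iff_integrableOn_Icc_of_le hle).2 hf.abs)
          ((intervalIntegrable_iff_integrableOn_Icc_of_le hle).2 hg) hbound
    _ = 2 * (1 - α) * (x₁ ^ (α - 1) - (x₁ - ε) ^ (α - 1)) / (α - 1) := by
      rw [intervalIntegral.integral_const_mul,
        integral_rpow (Or.inr ⟨by linarith, h0⟩), show α - 2 + 1 = α - 1 by ring,
        mul_div_assoc]
end
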